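/- Let n ≥ 1 and let A be an n×n real matrix that is entrywise nonnegative, irreducible in the sense that for every pair of indices i, j there exists m ≥ 1 with (A ^ m) i j > 0, whose every column sum satisfies ∑_{i} A i j ≤ 1, and which has at least one column j₀ with ∑_{i} A i j₀ < 1. Then every complex eigenvalue λ of A (every root λ ∈ ℂ of the characteristic polynomial of A.map Complex.ofReal) satisfies |λ| < 1; i.e., the spectral radius of A is strictly less than 1. -/

import Mathlib

/-!
Let `v` be a complex eigenvector for `λ` and `x = |v|` its entrywise modulus. The triangle
inequality gives `|λ| x ≤ A x`. If `|λ| ≥ 1`, summing this over all rows and using that the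
column sums are at most `1` squeezes every inequality into an equality: `A x = |λ| x`, and `x`
vanishes on every column whose sum is `< 1`. But a nonzero nonnegative eigenvector of an
irreducible matrix has no zero entry.
-/

open Finset

namespace Matrix

variable {ι : Type*} [Fintype ι]

theorem exists_mulVec_eq_smul_of_isRoot_charpoly {R : Type*} [CommRing R] [IsDomain R]
    [DecidableEq ι] {B : Matrix ι ι R} {μ : R} (h : B.charpoly.IsRoot μ) :
    ∃ v, v ≠ 0 ∧ B *ᵥ v = μ • v := by
  rw [← charpoly_toLin', ← Module.End.hasEigenvalue_iff_isRoot_charpoly] at h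
  obtain ⟨v, hv⟩ := h.exists_hasEigenvector
  exact ⟨v, hv.2, by simpa using hv.apply_eq_smul⟩

theorem norm_smul_le_mulVec_norm {A : Matrix ι ι ℝ} (hA : ∀ i j, 0 ≤ A i j) {μ : ℂ}
    {v : ι → ℂ} (hv : A.map (↑) *ᵥ v = μ • v) (i : ι) :
    ‖μ‖ * ‖v i‖ ≤ (A *ᵥ fun j => ‖v j‖) i := by
  have hvi : μ * v i = ∑ j, (A i j : ℂ) * v j := (congrFun hv i).symm
  calc ‖μ‖ * ‖v i‖ = ‖∑ j, (A i j : ℂ) * v j‖ := by rw [← hvi, norm_mul]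
    _ ≤ ∑ j, ‖(A i j : ℂ) * v j‖ := norm_sum_le _ _
    _ = (A *ᵥ fun j => ‖v j‖) i := by
      simp only [norm_mul, Complex.norm_real, Real.norm_of_nonneg (hA i _)]; rfl

theorem sum_mulVec_eq_sum_colSum_mul {R : Type*} [NonUnitalNonAssocSemiring R]
    (A : Matrix ι ι R) (x : ι → R) : ∑ i, (A *ᵥ x) i = ∑ j, (∑ i, A i j) * x j := by
  simp only [mulVec, dotProduct, sum_mul]
  exact sum_comm

theorem pow_mulVec_eq_smul {R : Type*} [CommSemiring R] [DecidableEq ι] {A : Matrix ι ι R}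
    {x : ι → R} {r : R} (h : A *ᵥ x = r • x) (k : ℕ) : (A ^ k) *ᵥ x = r ^ k • x := by
  induction k with
  | zero => simp
  | succ k ih => rw [pow_succ, ← mulVec_mulVec, h, mulVec_smul, ih, smul_smul, pow_succ']

section OrderedField

variable {R : Type*} [Field R] [LinearOrder R] [IsStrictOrderedRing R]

theorem mulVec_eq_smul_of_smul_le_mulVec {A : Matrix ι ι R} (hcol : ∀ j, ∑ i, A i j ≤ 1)
    {x : ι → R} (hx : 0 ≤ x) {r : R} (hr : 1 ≤ r) (h : r • x ≤ A *ᵥ x) :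
    A *ᵥ x = r • x ∧ ∀ j, ∑ i, A i j < 1 → x j = 0 := by
  have hcolx : ∀ j ∈ univ, (∑ i, A i j) * x j ≤ x j := fun j _ =>
    mul_le_of_le_one_left (hx j) (hcol j)
  have hrx : ∀ i ∈ univ, (r • x) i ≤ (A *ᵥ x) i := fun i _ => h i
  have hxr : ∑ j, x j ≤ ∑ i, (r • x) i :=
    sum_le_sum fun i _ => le_smul_of_one_le_left (hx i) hr
  have hsum_col : ∑ j, (∑ i, A i j) * x j = ∑ j, x j := by
    refine le_antisymm (sum_le_sum hcolx) ?_
    rw [← sum_mulVec_eq_sum_colSum_mul]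
    exact hxr.trans (sum_le_sum hrx)
  have hsum_r : ∑ i, (r • x) i = ∑ i, (A *ᵥ x) i := by
    refine le_antisymm (sum_le_sum hrx) ?_
    rw [sum_mulVec_eq_sum_colSum_mul, hsum_col]
    exact hxr
  refine ⟨funext fun i => ?_, fun j hj => ?_⟩
  · exact ((sum_eq_sum_iff_of_le hrx).1 hsum_r i (mem_univ i)).symm
  · have hxj := (sum_eq_sum_iff_of_le hcolx).1 hsum_col j (mem_univ j)
    by_contra hne
    exact (mul_lt_of_lt_one_left ((hx j).lt_of_ne' hne) hj).ne hxj

theorem IsIrreducible.pos_of_mulVec_eq_smul [DecidableEq ι] {A : Matrix ι ι R}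
    (hA : A.IsIrreducible) {x : ι → R} (hx : 0 ≤ x) (hx0 : x ≠ 0) {r : R}
    (h : A *ᵥ x = r • x) (j : ι) : 0 < x j := by
  obtain ⟨i, hi⟩ := Function.ne_iff.1 hx0
  obtain ⟨k, -, hk⟩ := (isIrreducible_iff_exists_pow_pos hA.nonneg).1 hA j i
  have hAk : (A ^ k) *ᵥ x = r ^ k • x := pow_mulVec_eq_smul h k
  have hpos : 0 < ((A ^ k) *ᵥ x) j :=
    sum_pos' (fun l _ => mul_nonneg (pow_apply_nonneg hA.nonneg k j l) (hx l))
      ⟨i, mem_univ i, mul_pos hk ((hx i).lt_of_ne' hi)⟩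
  rw [hAk, Pi.smul_apply, smul_eq_mul] at hpos
  exact (hx j).lt_of_ne' (right_ne_zero_of_mul hpos.ne')

end OrderedField

end Matrix

open Matrix in
theorem irreducible_substochastic_spectral_radius_lt_one_general
    (n : ℕ)
    (A : Matrix (Fin n) (Fin n) ℝ)
    (hA : ∀ i j, 0 ≤ A i j)
    (hirr : ∀ i j : Fin n, ∃ m : ℕ, 1 ≤ m ∧ 0 < (A ^ m) i j)
    (hcol : ∀ j, ∑ i, A i j ≤ 1)
    (hdef : ∃ j₀, ∑ i, A i j₀ < 1) :
    ∀ lam : ℂ, ((A.map Complex.ofReal).charpoly).IsRoot lam →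
      ‖lam‖ < 1 := by
  intro lam hroot
  by_contra! hge
  obtain ⟨v, hv0, hv⟩ := exists_mulVec_eq_smul_of_isRoot_charpoly hroot
  set x : Fin n → ℝ := fun j => ‖v j‖
  have hx : 0 ≤ x := fun j => norm_nonneg _
  have hx0 : x ≠ 0 := fun h => hv0 (funext fun j => norm_eq_zero.1 (congrFun h j))
  obtain ⟨hAx, hsupp⟩ :=
    mulVec_eq_smul_of_smul_le_mulVec hcol hx hge (norm_smul_le_mulVec_norm hA hv)
  have hirr' : A.IsIrreducible := (isIrreducible_iff_exists_pow_pos hA).2 hirr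
  obtain ⟨j₀, hj₀⟩ := hdef
  exact (hirr'.pos_of_mulVec_eq_smul hx hx0 hAx j₀).ne' (hsupp j₀ hj₀)

/-- If `A` is entrywise nonnegative, irreducible (for every `i, j` there is
`m ≥ 1` with `(A^m) i j > 0`), with every column sum at most `1` and at least
one column sum strictly less than `1`, then every complex eigenvalue of `A`
has modulus strictly less than `1`. -/
theorem irreducible_substochastic_spectral_radius_lt_one
    (n : ℕ) (hn : 1 ≤ n)
    (A : Matrix (Fin n) (Fin n) ℝ)
    (hA : ∀ i j, 0 ≤ A i j)
    (hirr : ∀ i j : Fin n, ∃ m : ℕ, 1 ≤ m ∧ 0 < (A ^ m) i j)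
    (hcol : ∀ j, ∑ i, A i j ≤ 1)
    (hdef : ∃ j₀, ∑ i, A i j₀ < 1) :
    ∀ lam : ℂ, ((A.map Complex.ofReal).charpoly).IsRoot lam →
      ‖lam‖ < 1 :=
  irreducible_substochastic_spectral_radius_lt_one_general n A hA hirr hcol hdef
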